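/- arXiv:1908.03549 — 4 statements merged into one kernel-verified Lean document; each statement's English description precedes it below -/
import Mathlib

section
/- Let R be a commutative ring with nilradical nil(R), let F be an element of the polynomial ring R[Z_1,...,Z_n], and let F̄ denote the image of F in (R/nil(R))[Z_1,...,Z_n]. Then F is a coordinate of R[Z_1,...,Z_n] over R if and only if F̄ is a coordinate of (R/nil(R))[Z_1,...,Z_n] over R/nil(R). -/
/-- `F` is a coordinate of the polynomial ring `R[Z_1,…,Z_n]` over `R`. -/
def IsCoordinate {R : Type*} [CommRing R] {n : ℕ} (F : MvPolynomial (Fin n) R) : Prop :=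
  ∃ (e : MvPolynomial (Fin n) R ≃ₐ[R] MvPolynomial (Fin n) R) (i : Fin n),
    e (MvPolynomial.X i) = F

/-- `F` is a residual coordinate of `R[Z_1,…,Z_n]`. -/
def IsResidualCoordinate {R : Type*} [CommRing R] {n : ℕ} (F : MvPolynomial (Fin n) R) : Prop :=
  ∀ (p : Ideal R) (_ : p.IsPrime),
    IsCoordinate (MvPolynomial.map
      (algebraMap R (IsLocalRing.ResidueField (Localization.AtPrime p))) F)

/-- `δ` is an `R`-linear exponential map `A → A[W]`. -/
def IsExpMap {R A : Type*} [CommRing R] [CommRing A] [Algebra R A]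
    (δ : A →ₐ[R] Polynomial A) : Prop :=
  (∀ a : A, (δ a).eval 0 = a) ∧
  ∀ a : A, (δ a).map (δ : A →+* Polynomial A) =
    Polynomial.eval₂ ((Polynomial.C).comp (Polynomial.C : A →+* Polynomial A))
      (Polynomial.X + Polynomial.C Polynomial.X) (δ a)

/-- A (reduced) ring is seminormal. -/
def IsSeminormalRing (R : Type*) [CommRing R] : Prop :=
  ∀ b c : R, b ^ 3 = c ^ 2 → ∃ a : R, a ^ 2 = b ∧ a ^ 3 = c

/-!
An endomorphism `θ` of `R[X_σ]` (with `σ` finite) that reduces to the identity modulo the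
nilradical is an automorphism: the coefficients of the `θ (X j) - X j` generate a finitely
generated, hence nilpotent, ideal `I`, and `θ - 1` carries `I ^ s R[X_σ]` into `I ^ (s + 1) R[X_σ]`,
so `θ` is a unipotent linear map. Applying this to `ψ ∘ φ` and `φ ∘ ψ`, where `φ` and `ψ` lift an
automorphism of `(R ⧸ nil R)[X_σ]` and its inverse (with `φ (X i) = F`), shows that `φ` is an
automorphism. Conversely, automorphisms of `R[X_σ]` descend along any ring homomorphism.
-/

open MvPolynomial

section NilpotentPerturbation

variable {R A : Type*} [CommRing R] [CommRing A] [Algebra R A] {I : Ideal R}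

theorem AlgHom.sub_mem_map_pow_succ (θ : A →ₐ[R] A) (hθ : ∀ a, θ a - a ∈ I.map (algebraMap R A))
    {s : ℕ} {x : A} (hx : x ∈ (I ^ s).map (algebraMap R A)) :
    θ x - x ∈ (I ^ (s + 1)).map (algebraMap R A) := by
  induction hx using Submodule.span_induction with
  | mem x hx =>
    obtain ⟨r, -, rfl⟩ := hx
    simp
  | zero => simp
  | add x y _ _ hx hy => rw [map_add, add_sub_add_comm]; exact add_mem hx hy
  | smul b x hx hdx =>
    have hsplit : θ (b • x) - b • x = θ b * (θ x - x) + x * (θ b - b) := by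
      simp only [smul_eq_mul, map_mul]; ring
    rw [hsplit, pow_succ, Ideal.map_mul]
    exact add_mem (Ideal.mul_mem_left _ _ (by rwa [← Ideal.map_mul, ← pow_succ]))
      (Ideal.mul_mem_mul hx (hθ b))

theorem AlgHom.bijective_of_forall_sub_mem_map_of_isNilpotent (hI : IsNilpotent I)
    (θ : A →ₐ[R] A) (hθ : ∀ a, θ a - a ∈ I.map (algebraMap R A)) : Function.Bijective θ := by
  set d : Module.End R A := θ.toLinearMap - 1 with hd_def
  have hd_pow : ∀ s a, (d ^ s) a ∈ (I ^ s).map (algebraMap R A) := by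
    intro s
    induction s with
    | zero => simp [Ideal.one_eq_top, Ideal.map_top]
    | succ s ih =>
      intro a
      rw [pow_succ' d, Module.End.mul_apply]
      exact θ.sub_mem_map_pow_succ hθ (ih a)
  obtain ⟨k, hk⟩ := hI
  have hd_nil : IsNilpotent d := ⟨k, LinearMap.ext fun a => by
    simpa [hk, Ideal.map_bot] using hd_pow k a⟩
  have hθ_eq : θ.toLinearMap = 1 + d := by rw [hd_def]; abel
  exact (Module.End.isUnit_iff _).mp (hθ_eq ▸ hd_nil.isUnit_one_add)

end NilpotentPerturbation

namespace MvPolynomial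

variable {R S σ τ υ : Type*} [CommRing R] [CommRing S]

noncomputable def baseChange (f : R →+* S) (φ : MvPolynomial σ R →ₐ[R] MvPolynomial τ R) :
    MvPolynomial σ S →ₐ[S] MvPolynomial τ S :=
  bind₁ fun j => map f (φ (X j))

theorem baseChange_X (f : R →+* S) (φ : MvPolynomial σ R →ₐ[R] MvPolynomial τ R) (j : σ) :
    baseChange f φ (X j) = map f (φ (X j)) :=
  bind₁_X_right _ j

theorem map_apply_eq_baseChange_map (f : R →+* S) (φ : MvPolynomial σ R →ₐ[R] MvPolynomial τ R)
    (p : MvPolynomial σ R) : map f (φ p) = baseChange f φ (map f p) := by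
  conv_lhs => rw [aeval_unique φ]
  exact map_bind₁ f _ p

theorem baseChange_comp (f : R →+* S) (φ : MvPolynomial τ R →ₐ[R] MvPolynomial υ R)
    (ψ : MvPolynomial σ R →ₐ[R] MvPolynomial τ R) :
    baseChange f (φ.comp ψ) = (baseChange f φ).comp (baseChange f ψ) := by
  ext j : 1
  rw [AlgHom.comp_apply, baseChange_X, baseChange_X, AlgHom.comp_apply,
    map_apply_eq_baseChange_map]

theorem baseChange_id (f : R →+* S) :
    baseChange f (AlgHom.id R (MvPolynomial σ R)) = AlgHom.id S _ := by
  ext j : 1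
  rw [baseChange_X, AlgHom.id_apply, map_X, AlgHom.id_apply]

theorem baseChange_bind₁ (f : R →+* S) (G : σ → MvPolynomial τ R) :
    baseChange f (bind₁ G) = bind₁ fun j => map f (G j) := by
  ext j : 1
  rw [baseChange_X, bind₁_X_right, bind₁_X_right]

theorem exists_baseChange_eq {f : R →+* S} (hf : Function.Surjective f)
    (φ : MvPolynomial σ S →ₐ[S] MvPolynomial τ S) :
    ∃ ψ : MvPolynomial σ R →ₐ[R] MvPolynomial τ R, baseChange f ψ = φ := by
  choose G hG using fun j => map_surjective f hf (φ (X j))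
  exact ⟨bind₁ G, by rw [baseChange_bind₁]; ext j : 1; simp [hG]⟩

theorem sub_mem_of_forall_X_sub_mem {J : Ideal (MvPolynomial σ R)}
    (θ : MvPolynomial σ R →ₐ[R] MvPolynomial σ R) (h : ∀ j, θ (X j) - X j ∈ J)
    (a : MvPolynomial σ R) : θ a - a ∈ J := by
  have : (Ideal.Quotient.mkₐ R J).comp θ = Ideal.Quotient.mkₐ R J :=
    algHom_ext fun j => Ideal.Quotient.eq.mpr (h j)
  exact Ideal.Quotient.eq.mp (AlgHom.congr_fun this a)

theorem exists_fg_le_forall_mem_map_C {ι : Type*} [Finite ι] {J : Ideal R}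
    (p : ι → MvPolynomial σ R) (hp : ∀ i, p i ∈ J.map C) :
    ∃ I : Ideal R, I.FG ∧ I ≤ J ∧ ∀ i, p i ∈ I.map C := by
  refine ⟨Ideal.span (⋃ i, ((p i).coeffs : Set R)),
    Submodule.fg_span (Set.finite_iUnion fun i => (p i).coeffs.finite_toSet), ?_, fun i => ?_⟩
  · rw [Ideal.span_le, Set.iUnion_subset_iff]
    intro i c hc
    obtain ⟨m, -, rfl⟩ := mem_coeffs_iff.mp hc
    exact mem_map_C_iff.mp (hp i) m
  · rw [mem_map_C_iff]
    intro m
    by_cases hm : (p i).coeff m = 0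
    · rw [hm]; exact zero_mem _
    · exact Ideal.subset_span (Set.mem_iUnion.mpr ⟨i, coeff_mem_coeffs m hm⟩)

theorem bijective_of_forall_X_sub_mem_map_nilradical [Finite σ]
    (θ : MvPolynomial σ R →ₐ[R] MvPolynomial σ R)
    (h : ∀ j, θ (X j) - X j ∈ (nilradical R).map C) : Function.Bijective θ := by
  obtain ⟨I, hI_fg, hI_le, hI⟩ := exists_fg_le_forall_mem_map_C _ h
  exact θ.bijective_of_forall_sub_mem_map_of_isNilpotent
    (hI_fg.isNilpotent_iff_le_nilradical.mpr hI_le) (sub_mem_of_forall_X_sub_mem θ hI)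

theorem bijective_of_baseChange_nilradical_eq_id [Finite σ] (θ : MvPolynomial σ R →ₐ[R] MvPolynomial σ R)
    (h : baseChange (Ideal.Quotient.mk (nilradical R)) θ = AlgHom.id _ _) :
    Function.Bijective θ := by
  refine bijective_of_forall_X_sub_mem_map_nilradical θ fun j => ?_
  rw [← Ideal.mk_ker (I := nilradical R), ← ker_map, RingHom.mem_ker, map_sub,
    map_apply_eq_baseChange_map, h]
  simp

theorem bijective_of_bijective_baseChange_nilradical [Finite σ]
    (φ : MvPolynomial σ R →ₐ[R] MvPolynomial σ R)
    (h : Function.Bijective (baseChange (Ideal.Quotient.mk (nilradical R)) φ)) :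
    Function.Bijective φ := by
  let e := AlgEquiv.ofBijective _ h
  obtain ⟨ψ, hψ⟩ := exists_baseChange_eq Ideal.Quotient.mk_surjective e.symm.toAlgHom
  have hψφ := bijective_of_baseChange_nilradical_eq_id (ψ.comp φ) (by
    rw [baseChange_comp, hψ]; exact e.symm_comp)
  have hφψ := bijective_of_baseChange_nilradical_eq_id (φ.comp ψ) (by
    rw [baseChange_comp, hψ]; exact e.comp_symm)
  exact ⟨hψφ.1.of_comp (f := ψ), hφψ.2.of_comp (f := φ)⟩

end MvPolynomial

theorem IsCoordinate.map {R S : Type*} [CommRing R] [CommRing S] {n : ℕ}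
    {F : MvPolynomial (Fin n) R} (hF : IsCoordinate F) (f : R →+* S) :
    IsCoordinate (MvPolynomial.map f F) := by
  obtain ⟨e, i, rfl⟩ := hF
  let e' : MvPolynomial (Fin n) R →ₐ[R] MvPolynomial (Fin n) R := e
  refine ⟨AlgEquiv.ofAlgHom (baseChange f e') (baseChange f e.symm) ?_ ?_, i, ?_⟩
  · rw [← baseChange_comp, e.comp_symm, baseChange_id]
  · rw [← baseChange_comp, e.symm_comp, baseChange_id]
  · exact baseChange_X f e' i

theorem IsCoordinate.of_map_mk_nilradical {R : Type*} [CommRing R] {n : ℕ}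
    {F : MvPolynomial (Fin n) R}
    (hF : IsCoordinate (MvPolynomial.map (Ideal.Quotient.mk (nilradical R)) F)) :
    IsCoordinate F := by
  obtain ⟨e, i, he⟩ := hF
  obtain ⟨φ₀, hφ₀⟩ := exists_baseChange_eq Ideal.Quotient.mk_surjective e.toAlgHom
  let φ := bind₁ (Function.update (fun j => φ₀ (X j)) i F)
  have hφ : baseChange (Ideal.Quotient.mk (nilradical R)) φ = e := by
    ext j : 1
    rw [baseChange_bind₁, bind₁_X_right]
    by_cases hj : j = i
    · rw [hj, Function.update_self]
      exact he.symm
    · rw [Function.update_of_ne hj, ← baseChange_X, hφ₀]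
  refine ⟨AlgEquiv.ofBijective φ (bijective_of_bijective_baseChange_nilradical φ (hφ ▸ e.bijective)), i, ?_⟩
  simp [φ]

/-- `F` is a coordinate over `R` iff its image is a coordinate over `R/nil(R)`. -/
theorem stmt0 {R : Type*} [CommRing R] {n : ℕ} (F : MvPolynomial (Fin n) R) :
    IsCoordinate F ↔
      IsCoordinate (MvPolynomial.map (Ideal.Quotient.mk (nilradical R)) F) :=
  ⟨fun hF => hF.map _, IsCoordinate.of_map_mk_nilradical⟩
end

section
/- Let R be a commutative ring, M and N finitely generated R-modules. Then the symmetric algebras Sym_R(M) and Sym_R(N) are isomorphic as R-algebras if and only if M and N are isomorphic as R-modules. -/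
universe u v w

/-- `ι : M →ₗ[R] A` exhibits the commutative `R`-algebra `A` as the symmetric algebra of the
`R`-module `M`, via the universal property. -/
def IsSymmetricAlgebraUP {R : Type u} [CommRing R] {M : Type v} [AddCommGroup M] [Module R M]
    {A : Type w} [CommRing A] [Algebra R A] (ι : M →ₗ[R] A) : Prop :=
  ∀ (B : Type (max u v w)) [CommRing B] [Algebra R B] (f : M →ₗ[R] B),
    ∃! g : A →ₐ[R] B, ∀ m : M, g (ι m) = f m

/-!
Read `A = Sym_R(M)` as the coordinate ring of the "affine space" with cotangent module `M`.
At an `R`-point `χ : A →ₐ[R] R`, the first-order Taylor expansion `ι m ↦ (χ (ι m), m)` is an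
algebra map `A → R ⊕ M` into the trivial square-zero extension, and every algebra map
`u : Sym M₁ → Sym M₂` induces, at an `R`-point `χ` of `Sym M₂`, a linear "cotangent map"
`M₁ → M₂`.
This construction is functorial, so an algebra isomorphism `Sym M ≃ Sym N` (together with any
`R`-point of `Sym M`, e.g. the one killing `M`) yields mutually inverse linear maps `M ⇄ N`.
-/

namespace IsSymmetricAlgebraUP

variable {R : Type u} [CommRing R]

section lift

variable {M : Type v} [AddCommGroup M] [Module R M] {A : Type w} [CommRing A] [Algebra R A]
  {ι : M →ₗ[R] A} {C : Type*} [CommRing C] [Algebra R C] [Small.{max u v w} C]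

theorem existsUnique (h : IsSymmetricAlgebraUP ι) (f : M →ₗ[R] C) :
    ∃! g : A →ₐ[R] C, ∀ m, g (ι m) = f m := by
  let j := Shrink.algEquiv.{max u v w} R C
  obtain ⟨g, hg, hu⟩ := h (Shrink.{max u v w} C) (j.symm.toLinearMap ∘ₗ f)
  refine ⟨j.toAlgHom.comp g, fun m => by simp [hg m], fun g' hg' => ?_⟩
  rw [← hu (j.symm.toAlgHom.comp g') fun m => by simp [hg' m]]
  ext
  simp

noncomputable def lift (h : IsSymmetricAlgebraUP ι) (f : M →ₗ[R] C) : A →ₐ[R] C :=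
  (h.existsUnique f).exists.choose

@[simp]
theorem lift_ι (h : IsSymmetricAlgebraUP ι) (f : M →ₗ[R] C) (m : M) : h.lift f (ι m) = f m :=
  (h.existsUnique f).exists.choose_spec m

theorem algHom_ext (h : IsSymmetricAlgebraUP ι) {g₁ g₂ : A →ₐ[R] C}
    (hg : ∀ m, g₁ (ι m) = g₂ (ι m)) : g₁ = g₂ :=
  (h.existsUnique (g₂.toLinearMap ∘ₗ ι)).unique hg fun _ => rfl

end lift

variable {M₁ M₂ M₃ : Type v} [AddCommGroup M₁] [Module R M₁] [AddCommGroup M₂] [Module R M₂]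
  [AddCommGroup M₃] [Module R M₃]
  {A₁ A₂ A₃ : Type w} [CommRing A₁] [Algebra R A₁] [CommRing A₂] [Algebra R A₂]
  [CommRing A₃] [Algebra R A₃] {ι₁ : M₁ →ₗ[R] A₁} {ι₂ : M₂ →ₗ[R] A₂} {ι₃ : M₃ →ₗ[R] A₃}

noncomputable def algEquivOfLinearEquiv (h₁ : IsSymmetricAlgebraUP ι₁)
    (h₂ : IsSymmetricAlgebraUP ι₂) (σ : M₁ ≃ₗ[R] M₂) : A₁ ≃ₐ[R] A₂ :=
  AlgEquiv.ofAlgHom (h₁.lift (ι₂ ∘ₗ σ.toLinearMap)) (h₂.lift (ι₁ ∘ₗ σ.symm.toLinearMap))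
    (h₂.algHom_ext fun n => by simp) (h₁.algHom_ext fun m => by simp)

noncomputable def jet [Module Rᵐᵒᵖ M₁] [IsCentralScalar R M₁] (h₁ : IsSymmetricAlgebraUP ι₁)
    (χ : A₁ →ₐ[R] R) : A₁ →ₐ[R] TrivSqZeroExt R M₁ :=
  h₁.lift (Algebra.linearMap R (TrivSqZeroExt R M₁) ∘ₗ χ.toLinearMap ∘ₗ ι₁ +
    TrivSqZeroExt.inrHom R M₁)

@[simp]
theorem fst_jet [Module Rᵐᵒᵖ M₁] [IsCentralScalar R M₁] (h₁ : IsSymmetricAlgebraUP ι₁)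
    (χ : A₁ →ₐ[R] R) (a : A₁) : (h₁.jet χ a).fst = χ a := by
  have : (TrivSqZeroExt.fstHom R R M₁).comp (h₁.jet χ) = χ :=
    h₁.algHom_ext fun m => by simp [jet, TrivSqZeroExt.algebraMap_eq_inl]
  exact AlgHom.congr_fun this a

@[simp]
theorem snd_jet_ι [Module Rᵐᵒᵖ M₁] [IsCentralScalar R M₁] (h₁ : IsSymmetricAlgebraUP ι₁)
    (χ : A₁ →ₐ[R] R) (m : M₁) : (h₁.jet χ (ι₁ m)).snd = m := by
  simp [jet, TrivSqZeroExt.algebraMap_eq_inl]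

noncomputable def cotangentMap [Module Rᵐᵒᵖ M₂] [IsCentralScalar R M₂] (ι₁ : M₁ →ₗ[R] A₁)
    (h₂ : IsSymmetricAlgebraUP ι₂) (χ : A₂ →ₐ[R] R) (u : A₁ →ₐ[R] A₂) : M₁ →ₗ[R] M₂ :=
  TrivSqZeroExt.sndHom R M₂ ∘ₗ ((h₂.jet χ).comp u).toLinearMap ∘ₗ ι₁

theorem jet_comp [Module Rᵐᵒᵖ M₁] [IsCentralScalar R M₁] [Module Rᵐᵒᵖ M₂] [IsCentralScalar R M₂]
    (h₁ : IsSymmetricAlgebraUP ι₁) (h₂ : IsSymmetricAlgebraUP ι₂)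
    (χ : A₂ →ₐ[R] R) (u : A₁ →ₐ[R] A₂) :
    (h₂.jet χ).comp u =
      (TrivSqZeroExt.map (h₂.cotangentMap ι₁ χ u)).comp (h₁.jet (χ.comp u)) :=
  h₁.algHom_ext fun m => TrivSqZeroExt.ext (by simp) (by simp [cotangentMap])

theorem cotangentMap_id [Module Rᵐᵒᵖ M₁] [IsCentralScalar R M₁] (h₁ : IsSymmetricAlgebraUP ι₁)
    (χ : A₁ →ₐ[R] R) : h₁.cotangentMap ι₁ χ (AlgHom.id R A₁) = LinearMap.id := by
  ext m
  simp [cotangentMap]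

theorem cotangentMap_comp [Module Rᵐᵒᵖ M₂] [IsCentralScalar R M₂] [Module Rᵐᵒᵖ M₃]
    [IsCentralScalar R M₃] (h₂ : IsSymmetricAlgebraUP ι₂) (h₃ : IsSymmetricAlgebraUP ι₃)
    (χ : A₃ →ₐ[R] R) (u₂ : A₂ →ₐ[R] A₃) (u₁ : A₁ →ₐ[R] A₂) :
    h₃.cotangentMap ι₁ χ (u₂.comp u₁) =
      h₃.cotangentMap ι₂ χ u₂ ∘ₗ h₂.cotangentMap ι₁ (χ.comp u₂) u₁ := by
  ext m
  have := congr_arg TrivSqZeroExt.snd (AlgHom.congr_fun (h₂.jet_comp h₃ χ u₂) (u₁ (ι₁ m)))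
  simpa [cotangentMap] using this

theorem nonempty_linearEquiv_of_algEquiv (h₁ : IsSymmetricAlgebraUP ι₁)
    (h₂ : IsSymmetricAlgebraUP ι₂) (e : A₁ ≃ₐ[R] A₂) : Nonempty (M₁ ≃ₗ[R] M₂) := by
  let : Module Rᵐᵒᵖ M₁ := Module.compHom _ ((RingHom.id R).fromOpposite mul_comm)
  have : IsCentralScalar R M₁ := ⟨fun _ _ => rfl⟩
  let : Module Rᵐᵒᵖ M₂ := Module.compHom _ ((RingHom.id R).fromOpposite mul_comm)
  have : IsCentralScalar R M₂ := ⟨fun _ _ => rfl⟩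
  let χ : A₁ →ₐ[R] R := h₁.lift 0
  have hχ : (χ.comp e.symm.toAlgHom).comp e.toAlgHom = χ := by
    ext
    simp
  have hcomp := cotangentMap_comp (ι₁ := ι₂) h₁ h₂ (χ.comp e.symm.toAlgHom) e.toAlgHom
    e.symm.toAlgHom
  rw [hχ] at hcomp
  refine ⟨.ofLinearMap (h₂.cotangentMap ι₁ (χ.comp e.symm.toAlgHom) e.toAlgHom)
    (h₁.cotangentMap ι₂ χ e.symm.toAlgHom) ?_ ?_⟩
  · rw [← hcomp, AlgEquiv.comp_symm, cotangentMap_id]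
  · rw [← cotangentMap_comp h₂ h₁, AlgEquiv.symm_comp, cotangentMap_id]

end IsSymmetricAlgebraUP

theorem stmt2_general {R : Type u} [CommRing R]
    {M : Type v} [AddCommGroup M] [Module R M]
    {N : Type v} [AddCommGroup N] [Module R N]
    {A₁ : Type w} [CommRing A₁] [Algebra R A₁] (ι₁ : M →ₗ[R] A₁)
    (h₁ : IsSymmetricAlgebraUP ι₁)
    {A₂ : Type w} [CommRing A₂] [Algebra R A₂] (ι₂ : N →ₗ[R] A₂)
    (h₂ : IsSymmetricAlgebraUP ι₂) :
    Nonempty (A₁ ≃ₐ[R] A₂) ↔ Nonempty (M ≃ₗ[R] N) :=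
  ⟨fun ⟨e⟩ => h₁.nonempty_linearEquiv_of_algEquiv h₂ e,
    fun ⟨σ⟩ => ⟨h₁.algEquivOfLinearEquiv h₂ σ⟩⟩

/-- `Sym_R(M) ≅ Sym_R(N)` as `R`-algebras iff `M ≅ N` as `R`-modules. -/
theorem stmt2 {R : Type u} [CommRing R]
    {M : Type v} [AddCommGroup M] [Module R M] [Module.Finite R M]
    {N : Type v} [AddCommGroup N] [Module R N] [Module.Finite R N]
    {A₁ : Type w} [CommRing A₁] [Algebra R A₁] (ι₁ : M →ₗ[R] A₁)
    (h₁ : IsSymmetricAlgebraUP ι₁)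
    {A₂ : Type w} [CommRing A₂] [Algebra R A₂] (ι₂ : N →ₗ[R] A₂)
    (h₂ : IsSymmetricAlgebraUP ι₂) :
    Nonempty (A₁ ≃ₐ[R] A₂) ↔ Nonempty (M ≃ₗ[R] N) :=
  stmt2_general ι₁ h₁ ι₂ h₂
end

section
/- Let R be a commutative ring, A = R[Z_1,...,Z_n], S a multiplicatively closed subset of R consisting of non-zerodivisors of R, and P ∈ A. If P is a coordinate in S^{-1}A over S^{-1}R, then there exists an R-linear exponential map φ_W : A → A[W] and an element a ∈ S such that φ_W(P) = aW + P. -/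
/-!
Over `K = S⁻¹R` the coordinate `P` is `e (Z_i)` for an automorphism `e` of `K[Z]`, so conjugating
the translation `Z_i ↦ Z_i + W` by `e` gives an exponential map `δ` of `K[Z]` with
`δ P = P + W`. Substituting `W ↦ a W`, where `a ∈ S` clears the denominators of the coefficients of
all `δ (Z_j)`, keeps `δ` exponential and makes it map `R[Z]` into `R[Z][W]`. Since `S` consists of
non-zerodivisors, `R[Z] → K[Z]` is injective, so the exponential identities descend to `R[Z]`.
-/

open Polynomial

namespace Polynomial

variable {A B : Type*} [CommRing A] [CommRing B] (f : A →+* B)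

theorem map_mapRingHom_eval₂_C_comp_C (p : A[X]) :
    (p.eval₂ (C.comp C) (X + C X)).map (mapRingHom f) = (p.map f).eval₂ (C.comp C) (X + C X) := by
  rw [← coe_mapRingHom, hom_eval₂, eval₂_map]
  congr 1
  · ext; simp
  · simp

theorem comp_C_mul_X_mem_range {p : B[X]} {c : B} (hc : c ∈ f.range)
    (h₀ : p.coeff 0 ∈ f.range) (h : ∀ k, c * p.coeff k ∈ f.range) :
    p.comp (C c * X) ∈ (mapRingHom f).range := by
  refine (mem_map_range f).mpr fun k => ?_
  rw [comp_C_mul_X_coeff]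
  cases k with
  | zero => simpa using h₀
  | succ k =>
    rw [pow_succ', mul_left_comm, ← mul_assoc]
    exact mul_mem (h _) (pow_mem hc k)

end Polynomial

section ExpMap

variable {K B : Type*} [CommRing K] [CommRing B] [Algebra K B]

theorem IsExpMap.of_injective {R A : Type*} [CommRing R] [CommRing A] [Algebra R A]
    {δ : A →ₐ[R] A[X]} {δ' : B →ₐ[K] B[X]} (hδ' : IsExpMap δ') {f : A →+* B}
    (hf : Function.Injective f) (h : ∀ a, (δ a).map f = δ' (f a)) : IsExpMap δ := by
  refine ⟨fun a => hf ?_,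
    fun a => Polynomial.map_injective (mapRingHom f) (map_injective f hf) ?_⟩
  · rw [← hδ'.1 (f a), ← h, eval_map, eval₂_at_zero, coeff_zero_eq_eval_zero]
  · have hcomm : (mapRingHom f).comp (δ : A →+* A[X]) = (δ' : B →+* B[X]).comp f :=
      RingHom.ext h
    rw [map_map, hcomm, ← map_map, h, hδ'.2, map_mapRingHom_eval₂_C_comp_C, h]

theorem IsExpMap.conj {δ : B →ₐ[K] B[X]} (hδ : IsExpMap δ) (e : B ≃ₐ[K] B) :
    IsExpMap ((mapAlgHom e.toAlgHom).comp (δ.comp e.symm.toAlgHom)) :=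
  hδ.of_injective (f := (e.symm : B →+* B)) e.symm.injective fun a => by
    change ((δ (e.symm a)).map (e : B →+* B)).map (e.symm : B →+* B) = δ (e.symm a)
    rw [map_map]
    convert map_id
    ext; simp

noncomputable def rescale (δ : B →ₐ[K] B[X]) (c : K) : B →ₐ[K] B[X] :=
  ((aeval (C (algebraMap K B c) * X)).restrictScalars K).comp δ

theorem rescale_apply (δ : B →ₐ[K] B[X]) (c : K) (b : B) :
    rescale δ c b = (δ b).comp (C (algebraMap K B c) * X) := by
  simp [rescale, comp_eq_aeval]

theorem isExpMap_rescale {δ : B →ₐ[K] B[X]} (hδ : IsExpMap δ) (c : K) :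
    IsExpMap (rescale δ c) := by
  set c' := algebraMap K B c
  -- both sides are `p (c U + c W)`
  have key (p : B[X]) : ((p.eval₂ (C.comp C) (X + C X)).map (compRingHom (C c' * X))).comp
      (C (C c') * X) = (p.comp (C c' * X)).eval₂ (C.comp C) (X + C X) := by
    induction p using Polynomial.induction_on' with
    | add p q hp hq => simp [hp, hq, add_comp]
    | monomial k b => simp [← C_mul_X_pow_eq_monomial, mul_pow, eval₂_pow, ← mul_add]
  have hcomp : (rescale δ c : B →+* B[X]) = (compRingHom (C c' * X)).comp δ :=
    RingHom.ext (rescale_apply δ c)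
  refine ⟨fun b => by simp [rescale_apply, hδ.1], fun b => ?_⟩
  rw [rescale_apply, ← key, ← hδ.2, map_map, ← hcomp, map_comp]
  simp [c']

end ExpMap

section Translation

variable {K σ : Type*} [CommRing K] [DecidableEq σ]

noncomputable def translation (i : σ) : MvPolynomial σ K →ₐ[K] (MvPolynomial σ K)[X] :=
  MvPolynomial.aeval fun j => C (MvPolynomial.X j) + if j = i then X else 0

@[simp]
theorem translation_X (i j : σ) :
    translation (K := K) i (MvPolynomial.X j) = C (MvPolynomial.X j) + if j = i then X else 0 :=
  MvPolynomial.aeval_X _ _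

@[simp]
theorem translation_C (i : σ) (k : K) :
    translation i (MvPolynomial.C k) = C (MvPolynomial.C k) :=
  (translation i).commutes k

theorem isExpMap_translation (i : σ) : IsExpMap (translation (K := K) i) := by
  set τ : MvPolynomial σ K →+* (MvPolynomial σ K)[X] := (translation (K := K) i).toRingHom
  constructor
  · suffices (evalRingHom 0).comp τ = RingHom.id _ from fun a => DFunLike.congr_fun this a
    apply MvPolynomial.ringHom_ext
    · simp [τ]
    · intro j
      by_cases hj : j = i <;> simp [τ, hj]
  · suffices (mapRingHom τ).comp τ =
        (eval₂RingHom (S := (MvPolynomial σ K)[X][X]) (C.comp C) (X + C X)).comp τ from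
      fun a => DFunLike.congr_fun this a
    apply MvPolynomial.ringHom_ext
    · simp [τ]
    · intro j
      by_cases hj : j = i <;> simp [τ, hj, add_comm, add_left_comm]

end Translation

namespace MvPolynomial

variable {R K σ : Type*} [CommRing R] [CommRing K] [Algebra R K]

attribute [local instance] algebraMvPolynomial in
theorem exists_C_mul_coeff_mem_range_map (S : Submonoid R) [IsLocalization S K] {ι : Type*}
    [Finite ι] (p : ι → (MvPolynomial σ K)[X]) :
    ∃ a ∈ S, ∀ i k, C (algebraMap R K a) * (p i).coeff k ∈
      (map (algebraMap R K) : MvPolynomial σ R →+* MvPolynomial σ K).range := by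
  have := Fintype.ofFinite ι
  obtain ⟨⟨_, a, ha, rfl⟩, hint⟩ := IsLocalization.exist_integer_multiples
    (R := MvPolynomial σ R) (S := MvPolynomial σ K) (S.map C)
    (Finset.univ.sigma fun i => (p i).support) fun ik => (p ik.1).coeff ik.2
  refine ⟨a, ha, fun i k => ?_⟩
  by_cases hk : k ∈ (p i).support
  · obtain ⟨b, hb⟩ := hint ⟨i, k⟩ (by simp [hk])
    exact ⟨b, by simpa [Algebra.smul_def] using hb⟩
  · simp [Polynomial.notMem_support_iff.mp hk]

theorem exists_algHom_map_comp (ψ : MvPolynomial σ K →ₐ[K] (MvPolynomial σ K)[X])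
    (h : ∀ j, ψ (X j) ∈ (mapRingHom (map (algebraMap R K))).range) :
    ∃ φ : MvPolynomial σ R →ₐ[R] (MvPolynomial σ R)[X], ∀ x,
      (φ x).map (map (algebraMap R K)) = ψ (map (algebraMap R K) x) := by
  choose g hg using h
  refine ⟨aeval g, fun x => ?_⟩
  suffices (mapRingHom (map (algebraMap R K))).comp (aeval g).toRingHom =
      ψ.toRingHom.comp (map (algebraMap R K)) from DFunLike.congr_fun this x
  apply ringHom_ext
  · intro r
    simp
  · intro j
    simpa using hg j

end MvPolynomial

/-- if `P` is a coordinate after inverting a multiplicative set of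
non-zerodivisors, there is an exponential map `φ_W` with `φ_W(P) = aW + P`, `a ∈ S`. -/
theorem stmt6 {R : Type*} [CommRing R] {n : ℕ} (S : Submonoid R)
    (hS : S ≤ nonZeroDivisors R) (P : MvPolynomial (Fin n) R)
    (hP : IsCoordinate (MvPolynomial.map (algebraMap R (Localization S)) P)) :
    ∃ a ∈ S, ∃ φ : MvPolynomial (Fin n) R →ₐ[R] Polynomial (MvPolynomial (Fin n) R),
      IsExpMap φ ∧
      φ P = Polynomial.C P + Polynomial.C (MvPolynomial.C a) * Polynomial.X := by
  obtain ⟨e, i, he⟩ := hP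
  set ι := MvPolynomial.map (σ := Fin n) (algebraMap R (Localization S))
  have hι : Function.Injective ι :=
    MvPolynomial.map_injective _ (IsLocalization.injective (Localization S) hS)
  set δ := (mapAlgHom e.toAlgHom).comp ((translation i).comp e.symm.toAlgHom)
  have hδ : IsExpMap δ := (isExpMap_translation i).conj e
  have hδP : δ (ι P) = C (ι P) + X := by simp [δ, ← he]
  obtain ⟨a, ha, hδint⟩ :=
    MvPolynomial.exists_C_mul_coeff_mem_range_map S fun j => δ (MvPolynomial.X j)
  set ψ := rescale δ (algebraMap R (Localization S) a)
  have hψ : ∀ j, ψ (MvPolynomial.X j) ∈ (mapRingHom ι).range := fun j => by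
    rw [rescale_apply]
    refine comp_C_mul_X_mem_range ι ⟨MvPolynomial.C a, by simp [ι]⟩ ?_ (hδint j)
    rw [coeff_zero_eq_eval_zero, hδ.1]
    exact ⟨MvPolynomial.X j, by simp [ι]⟩
  obtain ⟨φ, hφ⟩ := MvPolynomial.exists_algHom_map_comp ψ hψ
  refine ⟨a, ha, φ, (isExpMap_rescale hδ _).of_injective hι hφ, map_injective _ hι ?_⟩
  rw [hφ, rescale_apply, hδP]
  simp [ι]
end

section
/- Let R be a commutative ring, a a non-zerodivisor of R, and P ∈ R[Z_1,...,Z_n]. Suppose the image of P is an m-stable coordinate in (R/aR)[Z_1,...,Z_n]. Then F := aW + P is a (2m + n - 1)-stable coordinate in R[Z_1,...,Z_n,W]. -/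
open MvPolynomial

namespace MvPolynomial

variable {R : Type*} [CommRing R] {ι : Type*}

theorem eq_zero_of_C_mul_eq_zero {a : R} (ha : a ∈ nonZeroDivisors R) {p : MvPolynomial ι R}
    (h : C a * p = 0) : p = 0 := by
  ext d
  have hd : coeff d p * a = 0 := by rw [mul_comm, ← coeff_C_mul, h, coeff_zero]
  simpa using (mem_nonZeroDivisors_iff.mp ha).2 _ hd

noncomputable def perturb (a : R) (σ : ι → MvPolynomial ι R) (j : ι) :
    MvPolynomial (ι ⊕ ι) R :=
  rename Sum.inl (σ j) + C a * X (Sum.inr j)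

theorem bind₁_comp_bind₁_perturb_eq_id {a : R} (ha : a ∈ nonZeroDivisors R)
    (σ τ : ι → MvPolynomial ι R) (u v : ι → MvPolynomial (ι ⊕ ι) R)
    (hu : ∀ j, bind₁ (perturb a τ) (σ j) = X (Sum.inl j) + C a * u j)
    (hv : ∀ j, bind₁ (perturb a σ) (τ j) = X (Sum.inl j) + C a * v j) :
    (bind₁ (Sum.elim (perturb a τ) (-u))).comp (bind₁ (Sum.elim (perturb a σ) (-v))) =
      AlgHom.id R _ := by
  have hψ_perturb : (bind₁ (Sum.elim (perturb a τ) (-u))).comp (bind₁ (perturb a σ)) =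
      rename Sum.inl := by
    ext1 k
    simp only [AlgHom.comp_apply, bind₁_X_right, rename_X, perturb, map_add, map_mul,
      bind₁_rename, bind₁_C_right, Sum.elim_comp_inl, Sum.elim_inr, hu, Pi.neg_apply]
    ring
  have hψ_v : ∀ k, bind₁ (Sum.elim (perturb a τ) (-u)) (v k) = -X (Sum.inr k) := by
    intro k
    have h := DFunLike.congr_fun hψ_perturb (τ k)
    rw [AlgHom.comp_apply, hv] at h
    simp only [map_add, map_mul, bind₁_C_right, bind₁_X_right, Sum.elim_inl, perturb] at h
    refine eq_neg_of_add_eq_zero_left (eq_zero_of_C_mul_eq_zero ha ?_)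
    linear_combination h
  ext1 (k | k)
  · simpa [perturb] using DFunLike.congr_fun hψ_perturb (X k)
  · simp [hψ_v]

theorem C_dvd_bind₁_perturb_sub_X {a : R}
    (ε : MvPolynomial ι (R ⧸ Ideal.span {a}) ≃ₐ[R ⧸ Ideal.span {a}]
      MvPolynomial ι (R ⧸ Ideal.span {a}))
    {σ τ : ι → MvPolynomial ι R}
    (hσ : ∀ j, map (Ideal.Quotient.mk _) (σ j) = ε (X j))
    (hτ : ∀ j, map (Ideal.Quotient.mk _) (τ j) = ε.symm (X j)) (j : ι) :
    C a ∣ bind₁ (perturb a τ) (σ j) - X (Sum.inl j) := by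
  rw [C_dvd_iff_map_hom_eq_zero _ a
    (fun r => Ideal.Quotient.eq_zero_iff_mem.trans Ideal.mem_span_singleton)]
  have hτ_mod : (fun k => map (Ideal.Quotient.mk _) (perturb a τ k)) =
      ((rename Sum.inl).comp ε.symm.toAlgHom) ∘ X := by
    ext1 k
    simp [perturb, map_rename, hτ,
      Ideal.Quotient.eq_zero_iff_mem.mpr (Ideal.mem_span_singleton_self a)]
  rw [map_sub, map_bind₁, hσ, hτ_mod, bind₁, ← aeval_unique, map_X]
  simp

theorem exists_algEquiv_X_inl_eq {a : R} (ha : a ∈ nonZeroDivisors R)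
    (ε : MvPolynomial ι (R ⧸ Ideal.span {a}) ≃ₐ[R ⧸ Ideal.span {a}]
      MvPolynomial ι (R ⧸ Ideal.span {a}))
    (i : ι) (F : MvPolynomial ι R) (hF : map (Ideal.Quotient.mk _) F = ε (X i)) :
    ∃ e : MvPolynomial (ι ⊕ ι) R ≃ₐ[R] MvPolynomial (ι ⊕ ι) R,
      e (X (Sum.inl i)) = rename Sum.inl F + C a * X (Sum.inr i) := by
  classical
  choose lift hlift using
    map_surjective (σ := ι) _ (Ideal.Quotient.mk_surjective (I := Ideal.span {a}))
  let σ := Function.update (fun j => lift (ε (X j))) i F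
  let τ := fun j => lift (ε.symm (X j))
  have hσ : ∀ j, map (Ideal.Quotient.mk _) (σ j) = ε (X j) := by
    intro j
    rcases eq_or_ne j i with rfl | hj
    · simp [σ, hF]
    · simp [σ, hj, hlift]
  have hτ : ∀ j, map (Ideal.Quotient.mk _) (τ j) = ε.symm (X j) := fun j => hlift _
  choose u hu using C_dvd_bind₁_perturb_sub_X ε hσ hτ
  choose v hv using C_dvd_bind₁_perturb_sub_X ε.symm hτ (by simpa using hσ)
  refine ⟨AlgEquiv.ofAlgHom (bind₁ (Sum.elim (perturb a σ) (-v)))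
    (bind₁ (Sum.elim (perturb a τ) (-u)))
    (bind₁_comp_bind₁_perturb_eq_id ha τ σ v u (fun j => eq_add_of_sub_eq' (hv j))
      (fun j => eq_add_of_sub_eq' (hu j)))
    (bind₁_comp_bind₁_perturb_eq_id ha σ τ u v (fun j => eq_add_of_sub_eq' (hu j))
      (fun j => eq_add_of_sub_eq' (hv j))), ?_⟩
  simp [perturb, σ]

end MvPolynomial

theorem Equiv.exists_extending_of_card_eq {α β γ : Type*} [Finite α] [Fintype β] [Fintype γ]
    (h : Fintype.card β = Fintype.card γ) {f : α → β} {g : α → γ}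
    (hf : Function.Injective f) (hg : Function.Injective g) :
    ∃ q : β ≃ γ, ∀ x, q (f x) = g x := by
  let q₀ := Fintype.equivOfCardEq h
  obtain ⟨π, hπ⟩ := Equiv.Perm.exists_extending_pair (q₀ ∘ f) g (q₀.injective.comp hf) hg
  exact ⟨q₀.trans π, hπ⟩

theorem isCoordinate_rename_algEquiv {R σ : Type*} [CommRing R] {k : ℕ} (q : σ ≃ Fin k)
    (e : MvPolynomial σ R ≃ₐ[R] MvPolynomial σ R) (s : σ) :
    IsCoordinate (rename q (e (X s))) :=
  ⟨(renameEquiv R q.symm).trans (e.trans (renameEquiv R q)), q s, by simp⟩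

/-- if the image of `P` is an `m`-stable coordinate mod a non-zerodivisor `a`,
then `aW + P` is a `(2m + n - 1)`-stable coordinate. -/
theorem stmt12 {R : Type*} [CommRing R] (a : R) (ha : a ∈ nonZeroDivisors R)
    {n : ℕ} (P : MvPolynomial (Fin n) R) (m : ℕ)
    (hP : IsCoordinate (MvPolynomial.rename (Fin.castAdd m)
      (MvPolynomial.map (Ideal.Quotient.mk (Ideal.span {a})) P) :
        MvPolynomial (Fin (n + m)) (R ⧸ Ideal.span {a}))) :
    IsCoordinate (MvPolynomial.rename (Fin.castAdd (2 * m + n - 1))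
      (MvPolynomial.C a * MvPolynomial.X (Fin.last n) +
        MvPolynomial.rename Fin.castSucc P : MvPolynomial (Fin (n + 1)) R) :
          MvPolynomial (Fin ((n + 1) + (2 * m + n - 1))) R) := by
  obtain ⟨ε, i, hi⟩ := hP
  have hnm : 0 < n + m := i.pos
  obtain ⟨e, he⟩ :=
    exists_algEquiv_X_inl_eq ha ε i (rename (Fin.castAdd m) P) (by rw [map_rename, hi])
  let g : Fin (n + 1) → Fin (n + m) ⊕ Fin (n + m) :=
    Fin.snoc (Sum.inl ∘ Fin.castAdd m) (Sum.inr i)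
  have hg : Function.Injective g :=
    Fin.snoc_injective_of_injective (Sum.inl_injective.comp (Fin.castAdd_injective n m))
      (by simp)
  obtain ⟨q, hq⟩ := Equiv.exists_extending_of_card_eq
    (by simp only [Fintype.card_sum, Fintype.card_fin]; omega) hg
    (Fin.castAdd_injective (n + 1) (2 * m + n - 1))
  have hrename : rename (Fin.castAdd (2 * m + n - 1))
      (C a * X (Fin.last n) + rename Fin.castSucc P : MvPolynomial (Fin (n + 1)) R) =
        rename q (e (X (Sum.inl i))) := by
    rw [he, ← funext hq]
    simp [g, rename_rename, Function.comp_def, add_comm]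
  rw [hrename]
  exact isCoordinate_rename_algEquiv q e _
end
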